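/- Let x₁ ∼ p_data, t ∼ U(0,1), x_t ∼ p_t(·|x₁), and define the marginal velocity u_t(x) = E[u_t(x|x₁) | x_t = x]. Then for any measurable vector field v, the marginal objective E‖u_t(x_t) − v(t,x_t)‖² and the conditional objective E‖u_t(x_t|x₁) − v(t,x_t)‖² differ by a constant independent of v; in particular E‖u_t(x_t|x₁) − v(t,x_t)‖² = E‖u_t(x_t) − v(t,x_t)‖² + E‖u_t(x_t|x₁) − u_t(x_t)‖². -/

import Mathlib

/-! Write `c = E[Y | t, x_t]` and `Y - v = (c - v) + (Y - c)`. Since `c - v` is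
`σ(t, x_t)`-measurable, the pull-out property gives `E⟪c - v, Y⟫ = E⟪c - v, c⟫`, so the
cross term `E⟪c - v, Y - c⟫` of the expanded square vanishes. -/

open MeasureTheory

section

variable {Ω E : Type*} [NormedAddCommGroup E] [InnerProductSpace ℝ E]
  {m m0 : MeasurableSpace Ω} {μ : Measure Ω}

theorem MeasureTheory.MemLp.integrable_inner {f g : Ω → E} (hf : MemLp f 2 μ)
    (hg : MemLp g 2 μ) : Integrable (fun x => inner ℝ (f x) (g x)) μ :=
  memLp_one_iff_integrable.1 ((innerSL ℝ).memLp_of_bilin 1 hf hg)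

variable [CompleteSpace E]

theorem integral_inner_condExp_of_aestronglyMeasurable_left (hm : m ≤ m0)
    [SigmaFinite (μ.trim hm)] {f g : Ω → E} (hg : AEStronglyMeasurable[m] g μ)
    (hgf : Integrable (fun x => inner ℝ (g x) (f x)) μ) (hf : Integrable f μ) :
    ∫ x, inner ℝ (g x) ((μ[f|m]) x) ∂μ = ∫ x, inner ℝ (g x) (f x) ∂μ := by
  have pull_out : μ[fun x => inner ℝ (g x) (f x)|m] =ᵐ[μ] fun x => inner ℝ (g x) ((μ[f|m]) x) :=
    condExp_bilin_of_aestronglyMeasurable_left (innerSL ℝ) hg hgf hf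
  rw [← integral_congr_ae pull_out, integral_condExp hm]

theorem integral_norm_sub_sq_eq_integral_norm_condExp_sub_sq_add (hm : m ≤ m0)
    [IsFiniteMeasure μ] {f g : Ω → E} (hf : MemLp f 2 μ) (hg : MemLp g 2 μ)
    (hgm : AEStronglyMeasurable[m] g μ) :
    ∫ x, ‖f x - g x‖ ^ 2 ∂μ
      = ∫ x, ‖(μ[f|m]) x - g x‖ ^ 2 ∂μ + ∫ x, ‖f x - (μ[f|m]) x‖ ^ 2 ∂μ := by
  set c := μ[f|m]
  have hc : MemLp c 2 μ := hf.condExp one_le_two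
  have hcg : MemLp (fun x => c x - g x) 2 μ := hc.sub hg
  have hfc : MemLp (fun x => f x - c x) 2 μ := hf.sub hc
  have orthogonal : ∫ x, inner ℝ (c x - g x) (f x - c x) ∂μ = 0 := by
    have pull_out : ∫ x, inner ℝ (c x - g x) (c x) ∂μ = ∫ x, inner ℝ (c x - g x) (f x) ∂μ :=
      integral_inner_condExp_of_aestronglyMeasurable_left hm
        (stronglyMeasurable_condExp.aestronglyMeasurable.sub hgm) (hcg.integrable_inner hf)
        (hf.integrable one_le_two)
    simp_rw [inner_sub_right]
    rw [integral_sub (hcg.integrable_inner hf) (hcg.integrable_inner hc), pull_out, sub_self]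
  have expand : ∀ x, ‖f x - g x‖ ^ 2
      = ‖c x - g x‖ ^ 2 + ‖f x - c x‖ ^ 2 + 2 * inner ℝ (c x - g x) (f x - c x) := by
    intro x
    rw [← sub_add_sub_cancel (f x) (c x) (g x), add_comm, norm_add_sq_real]
    ring
  have hcg_sq := (memLp_two_iff_integrable_sq_norm hcg.1).1 hcg
  have hfc_sq := (memLp_two_iff_integrable_sq_norm hfc.1).1 hfc
  have h_sum : Integrable (fun x => ‖c x - g x‖ ^ 2 + ‖f x - c x‖ ^ 2) μ := hcg_sq.add hfc_sq
  simp_rw [expand]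
  rw [integral_add h_sum ((hcg.integrable_inner hfc).const_mul 2),
    integral_add hcg_sq hfc_sq, integral_const_mul, orthogonal, mul_zero, add_zero]

end

/-- in the conditional flow-matching setting, with `Y ω = u_{t(ω)}(x_t(ω) | x₁(ω))`
the conditional velocity and `Ybar = E[Y | σ(t, x_t)]` the marginal velocity, for any
measurable vector field `v` the conditional and marginal objectives satisfy
`E‖Y − v(t,x_t)‖² = E‖Ybar − v(t,x_t)‖² + E‖Y − Ybar‖²`; in particular they differ
by a constant independent of `v`. -/
theorem conditional_vs_marginal_objective {d : ℕ}
    {Ω : Type*} [m0 : MeasurableSpace Ω] (P : Measure Ω) [IsProbabilityMeasure P]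
    (T : Ω → ℝ) (Xt : Ω → EuclideanSpace ℝ (Fin d))
    -- the conditional velocity evaluated along the trajectory: Y ω = u_{T ω}(Xt ω | X₁ ω)
    (Y : Ω → EuclideanSpace ℝ (Fin d))
    (hY : MemLp Y 2 P)
    -- sub-σ-algebra generated by (t, x_t)
    (m : MeasurableSpace Ω)
    (hm_def : m = MeasurableSpace.comap (fun ω => (T ω, Xt ω)) inferInstance)
    (hm : m ≤ m0)
    -- the marginal velocity field u_t(x) = E[Y | x_t = x, t], as a function on Ω
    (Ybar : Ω → EuclideanSpace ℝ (Fin d))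
    (hYbar : Ybar = P[Y | m])
    -- an arbitrary measurable vector field v(t, x) with square-integrable composite
    (v : ℝ → EuclideanSpace ℝ (Fin d) → EuclideanSpace ℝ (Fin d))
    (hv : Measurable (Function.uncurry v))
    (hvL2 : MemLp (fun ω => v (T ω) (Xt ω)) 2 P) :
    ∫ ω, ‖Y ω - v (T ω) (Xt ω)‖ ^ 2 ∂P
      = ∫ ω, ‖Ybar ω - v (T ω) (Xt ω)‖ ^ 2 ∂P + ∫ ω, ‖Y ω - Ybar ω‖ ^ 2 ∂P := by
  have h_time_state : Measurable[m] fun ω => (T ω, Xt ω) :=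
    hm_def ▸ Measurable.of_comap_le le_rfl
  have hv_m : AEStronglyMeasurable[m] (fun ω => v (T ω) (Xt ω)) P :=
    (hv.comp h_time_state).aestronglyMeasurable
  subst hYbar
  exact integral_norm_sub_sq_eq_integral_norm_condExp_sub_sq_add hm hY hvL2 hv_m
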